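/- arXiv:2202.01292 — 8 statements merged into one kernel-verified Lean document; each statement's English description precedes it below -/
import Mathlib

section
/- Let d, H, K ∈ ℕ be positive and λ̃ > 0. For each h ∈ {1,…,H} and k ∈ {1,…,K}, let Λ_h^k be a real d×d positive definite matrix such that Λ_h^{k₂} − Λ_h^{k₁} is positive semidefinite whenever k₁ ≤ k₂, det(Λ_h^1) ≥ λ̃^d, and det(Λ_h^K) ≤ (λ̃ + K/d)^d. Suppose 1 = k_0 < k_1 < ⋯ < k_N ≤ K are episodes such that for every i ∈ {1,…,N} there exists h ∈ {1,…,H} with det(Λ_h^{k_i}) > 2·det(Λ_h^{k_{i-1}}). Then N ≤ (dH / log 2) · log(1 + K/(λ̃ d)). -/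
/-!
Charge each update `i` to a step `h` whose determinant it doubles. Along the Loewner-increasing
sequence `Λ_h^k` determinants are monotone (conjugating by `(Λ_h^{k₁})^{-1/2}` reduces this to
`det (1 + D) ≥ 1` for `D ⪰ 0`), so the updates charged to `h` each at least double `det Λ_h`;
hence there are at most `log₂ (det Λ_h^K / det Λ_h^1) ≤ d · log₂ (1 + K / (λ̃ d))` of them.
Summing over the `H` steps gives the bound.
-/

open Finset Matrix Real
open scoped MatrixOrder

namespace Matrix

variable {n : Type*} [Fintype n] [DecidableEq n]

theorem PosSemidef.one_le_det_one_add {D : Matrix n n ℝ} (hD : D.PosSemidef) :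
    1 ≤ (1 + D).det := by
  have hD_sa : IsSelfAdjoint D := hD.isHermitian
  have hcfc : 1 + D = cfc (fun x : ℝ => 1 + x) D := by
    rw [cfc_add .., cfc_const_one .., cfc_id' ..]
  rw [hcfc, hD.isHermitian.cfc_eq]
  simp only [IsHermitian.cfc, det_map, det_diagonal, Function.comp_apply, RCLike.ofReal_real_eq_id,
    id]
  exact Finset.one_le_prod fun i _ => le_add_of_nonneg_right (hD.eigenvalues_nonneg i)

theorem PosDef.det_le_det_of_le {A B : Matrix n n ℝ} (hA : A.PosDef) (hAB : A ≤ B) :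
    A.det ≤ B.det := by
  set S := CFC.sqrt A
  have hS : S * S = A := CFC.sqrt_mul_sqrt_self A hA.posSemidef.nonneg
  have hSdet : IsUnit S.det := by
    rw [← isUnit_iff_isUnit_det, CFC.isUnit_sqrt_iff A hA.posSemidef.nonneg]
    exact hA.isUnit
  have hD : (S⁻¹ * (B - A) * S⁻¹).PosSemidef := by
    have := (le_iff.mp hAB).conjTranspose_mul_mul_same S⁻¹
    rwa [(CFC.sqrt_nonneg A).posSemidef.isHermitian.inv.eq] at this
  have hB : B = S * (1 + S⁻¹ * (B - A) * S⁻¹) * S := by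
    simp only [mul_add, add_mul, mul_one, ← Matrix.mul_assoc, mul_nonsing_inv _ hSdet, one_mul,
      Matrix.mul_assoc _ S⁻¹ S, nonsing_inv_mul _ hSdet, mul_one, hS]
    abel
  have hdet : B.det = A.det * (1 + S⁻¹ * (B - A) * S⁻¹).det := by
    conv_lhs => rw [hB]
    rw [← hS, det_mul, det_mul, det_mul]
    ring
  rw [hdet]
  exact le_mul_of_one_le_right hA.det_pos.le hD.one_le_det_one_add

theorem PosSemidef.det_le_det_of_le {A B : Matrix n n ℝ} (hA : A.PosSemidef) (hAB : A ≤ B) :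
    A.det ≤ B.det := by
  by_cases hdet : A.det = 0
  · rw [hdet]
    exact (hA.nonneg.trans hAB).posSemidef.det_nonneg
  · exact (hA.posDef_iff_det_ne_zero.mpr hdet).det_le_det_of_le hAB

end Matrix

theorem two_pow_card_filter_mul_le {a : ℕ → ℝ} {p : ℕ → Prop} [DecidablePred p] {N : ℕ}
    (hmono : ∀ i < N, a i ≤ a (i + 1)) (hdouble : ∀ i < N, p (i + 1) → 2 * a i ≤ a (i + 1)) :
    2 ^ #{i ∈ Icc 1 N | p i} * a 0 ≤ a N := by
  induction N with
  | zero => simp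
  | succ N ih =>
    have ih := ih (fun i hi => hmono i (by omega)) (fun i hi => hdouble i (by omega))
    rw [← insert_Icc_right_eq_Icc_add_one (by omega), filter_insert]
    by_cases hp : p (N + 1)
    · rw [if_pos hp, card_insert_of_notMem (by simp), pow_succ']
      calc 2 * 2 ^ #{i ∈ Icc 1 N | p i} * a 0 ≤ 2 * a N := by rw [mul_assoc]; linarith
        _ ≤ a (N + 1) := hdouble N N.lt_succ_self hp
    · rw [if_neg hp]
      exact ih.trans (hmono N N.lt_succ_self)

theorem card_filter_le_logb_of_doubling {a : ℕ → ℝ} {p : ℕ → Prop} [DecidablePred p] {N : ℕ}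
    {L U : ℝ} (hL : 0 < L) (ha₀ : L ≤ a 0) (haN : a N ≤ U)
    (hmono : ∀ i < N, a i ≤ a (i + 1)) (hdouble : ∀ i < N, p (i + 1) → 2 * a i ≤ a (i + 1)) :
    (#{i ∈ Icc 1 N | p i} : ℝ) ≤ logb 2 (U / L) := by
  have hpow : (2 : ℝ) ^ #{i ∈ Icc 1 N | p i} ≤ U / L := by
    rw [le_div_iff₀ hL]
    calc _ ≤ 2 ^ #{i ∈ Icc 1 N | p i} * a 0 := by gcongr
      _ ≤ a N := two_pow_card_filter_mul_le hmono hdouble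
      _ ≤ U := haN
  rwa [le_logb_iff_rpow_le one_lt_two ((pow_pos two_pos _).trans_le hpow), rpow_natCast]

theorem Finset.card_le_card_mul_of_forall_card_fiber_le {α β R : Type*} [DecidableEq β]
    [Semiring R] [PartialOrder R] [IsOrderedRing R] {f : α → β} {s : Finset α} {t : Finset β}
    (hf : ∀ a ∈ s, f a ∈ t) {B : R} (hB : ∀ b ∈ t, (#{a ∈ s | f a = b} : R) ≤ B) :
    (#s : R) ≤ #t * B := by
  rw [card_eq_sum_card_fiberwise hf, Nat.cast_sum, ← nsmul_eq_mul]
  exact sum_le_card_nsmul _ _ _ hB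

theorem switching_cost_general (d H K : ℕ)
    (lam : ℝ) (hlam : 0 < lam)
    (Λ : ℕ → ℕ → Matrix (Fin d) (Fin d) ℝ)
    (hpd : ∀ h ∈ Finset.Icc 1 H, ∀ k ∈ Finset.Icc 1 K, (Λ h k).PosDef)
    (hmono : ∀ h ∈ Finset.Icc 1 H, ∀ k₁ k₂ : ℕ, 1 ≤ k₁ → k₁ ≤ k₂ → k₂ ≤ K →
      (Λ h k₂ - Λ h k₁).PosSemidef)
    (hdet_init : ∀ h ∈ Finset.Icc 1 H, lam ^ d ≤ (Λ h 1).det)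
    (hdet_final : ∀ h ∈ Finset.Icc 1 H, (Λ h K).det ≤ (lam + (K : ℝ) / d) ^ d)
    (N : ℕ) (ks : ℕ → ℕ) (hks0 : ks 0 = 1)
    (hks_mono : ∀ i < N, ks i < ks (i + 1)) (hksN : ks N ≤ K)
    (hdouble : ∀ i ∈ Finset.Icc 1 N, ∃ h ∈ Finset.Icc 1 H,
      2 * (Λ h (ks (i - 1))).det < (Λ h (ks i)).det) :
    (N : ℝ) ≤ ((d : ℝ) * H / Real.log 2) * Real.log (1 + (K : ℝ) / (lam * d)) := by
  classical
  choose! f hf using hdouble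
  have hks : MonotoneOn ks (Set.Iic N) := (strictMonoOn_Iic_of_lt_succ hks_mono).monotoneOn
  have hks_mem : ∀ i ≤ N, ks i ∈ Icc 1 K := fun i hi =>
    mem_Icc.2 ⟨hks0 ▸ hks (Nat.zero_le N) hi (Nat.zero_le i), (hks hi (le_refl N) hi).trans hksN⟩
  have hdet_mono : ∀ h ∈ Icc 1 H, ∀ k₁ ∈ Icc 1 K, ∀ k₂, k₁ ≤ k₂ → k₂ ≤ K →
      (Λ h k₁).det ≤ (Λ h k₂).det := fun h hh k₁ hk₁ k₂ h12 hk₂ =>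
    (hpd h hh k₁ hk₁).posSemidef.det_le_det_of_le (hmono h hh k₁ k₂ (mem_Icc.1 hk₁).1 h12 hk₂)
  have hfiber : ∀ h ∈ Icc 1 H,
      (#{i ∈ Icc 1 N | f i = h} : ℝ) ≤ logb 2 ((lam + K / d) ^ d / lam ^ d) := fun h hh =>
    card_filter_le_logb_of_doubling (a := fun i => (Λ h (ks i)).det) (pow_pos hlam d)
      (hks0 ▸ hdet_init h hh)
      ((hdet_mono h hh _ (hks_mem N le_rfl) K hksN le_rfl).trans (hdet_final h hh))
      (fun i hi => hdet_mono h hh _ (hks_mem i hi.le) _ (hks_mono i hi).le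
        (mem_Icc.1 (hks_mem (i + 1) hi)).2)
      (fun i hi hfi => by simpa [hfi] using (hf (i + 1) (by simp; omega)).2.le)
  have hratio : (lam + K / d) ^ d / lam ^ d = (1 + K / (lam * d)) ^ d := by
    rw [← div_pow, add_div, div_self hlam.ne', div_div, mul_comm]
  calc (N : ℝ) = #(Icc 1 N) := by simp
    _ ≤ #(Icc 1 H) * logb 2 ((lam + K / d) ^ d / lam ^ d) :=
      card_le_card_mul_of_forall_card_fiber_le (fun i hi => (hf i hi).1) hfiber
    _ = _ := by rw [hratio, logb, log_pow, Nat.card_Icc]; push_cast; ring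

/-- Switching-cost bound: if each policy update episode `ks i` doubles the determinant of
some per-step covariance matrix `Λ h (ks i)` compared to `Λ h (ks (i-1))`, and all
determinants stay between `λ̃^d` and `(λ̃ + K/d)^d`, then the number of updates `N`
is at most `(dH / log 2) · log(1 + K/(λ̃ d))`. -/
theorem switching_cost (d H K : ℕ) (hd : 0 < d) (hH : 0 < H) (hK : 0 < K)
    (lam : ℝ) (hlam : 0 < lam)
    (Λ : ℕ → ℕ → Matrix (Fin d) (Fin d) ℝ)
    (hpd : ∀ h ∈ Finset.Icc 1 H, ∀ k ∈ Finset.Icc 1 K, (Λ h k).PosDef)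
    (hmono : ∀ h ∈ Finset.Icc 1 H, ∀ k₁ k₂ : ℕ, 1 ≤ k₁ → k₁ ≤ k₂ → k₂ ≤ K →
      (Λ h k₂ - Λ h k₁).PosSemidef)
    (hdet_init : ∀ h ∈ Finset.Icc 1 H, lam ^ d ≤ (Λ h 1).det)
    (hdet_final : ∀ h ∈ Finset.Icc 1 H, (Λ h K).det ≤ (lam + (K : ℝ) / d) ^ d)
    (N : ℕ) (ks : ℕ → ℕ) (hks0 : ks 0 = 1)
    (hks_mono : ∀ i < N, ks i < ks (i + 1)) (hksN : ks N ≤ K)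
    (hdouble : ∀ i ∈ Finset.Icc 1 N, ∃ h ∈ Finset.Icc 1 H,
      2 * (Λ h (ks (i - 1))).det < (Λ h (ks i)).det) :
    (N : ℝ) ≤ ((d : ℝ) * H / Real.log 2) * Real.log (1 + (K : ℝ) / (lam * d)) :=
  switching_cost_general d H K lam hlam Λ hpd hmono hdet_init hdet_final N ks hks0 hks_mono hksN
    hdouble
end

section
/- Let A and B be real symmetric positive definite d×d matrices with A − B positive semidefinite. Then for every x ∈ ℝ^d, √(xᵀ A x) ≤ √(xᵀ B x) · √(det(A)/det(B)). -/
/-!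
With `S = √B`, the matrix `M = S⁻¹ A S⁻¹` satisfies `M ⪰ 1`, so all its eigenvalues are at
least `1` and each of them is bounded by their product `det M = det A / det B`. Hence
`M ⪯ det M • 1`, and substituting `y = S x` turns `yᵀ M y ≤ det M · yᵀ y` into
`xᵀ A x ≤ (det A / det B) · xᵀ B x`.
-/

open scoped MatrixOrder
open Matrix

lemma Finset.single_le_prod_of_one_le {ι β : Type*} [CommMonoidWithZero β] [PartialOrder β]
    [PosMulMono β] [ZeroLEOneClass β] {f : ι → β} {s : Finset ι} (h : ∀ i, 1 ≤ f i) {i : ι}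
    (hi : i ∈ s) : f i ≤ ∏ j ∈ s, f j :=
  Multiset.mem_le_prod_of_one_le h hi

namespace Matrix

variable {n : Type*} [Fintype n]

lemma le_algebraMap_det_of_one_le [DecidableEq n] {M : Matrix n n ℝ} (hM : 1 ≤ M) :
    M ≤ algebraMap ℝ _ M.det := by
  have hH : M.IsHermitian := by simpa using hM.isHermitian.add isHermitian_one
  have hspec : ∀ x ∈ spectrum ℝ M, 1 ≤ x := by
    rwa [← algebraMap_le_iff_le_spectrum, map_one]
  have heig : ∀ i, 1 ≤ hH.eigenvalues i := fun i => hspec _ (hH.eigenvalues_mem_spectrum_real i)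
  rw [le_algebraMap_iff_spectrum_le, hH.spectrum_real_eq_range_eigenvalues]
  rintro _ ⟨i, rfl⟩
  simpa [hH.det_eq_prod_eigenvalues] using
    Finset.single_le_prod_of_one_le heig (Finset.mem_univ i)

lemma dotProduct_mulVec_mono {M N : Matrix n n ℝ} (h : M ≤ N) (x : n → ℝ) :
    x ⬝ᵥ M *ᵥ x ≤ x ⬝ᵥ N *ᵥ x := by
  simpa [sub_mulVec, dotProduct_sub, sub_nonneg] using h.dotProduct_mulVec_nonneg x

lemma dotProduct_mulVec_le_det_mul [DecidableEq n] {M : Matrix n n ℝ} (hM : 1 ≤ M) (x : n → ℝ) :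
    x ⬝ᵥ M *ᵥ x ≤ M.det * (x ⬝ᵥ x) := by
  simpa [Algebra.algebraMap_eq_smul_one, smul_mulVec, dotProduct_smul] using
    dotProduct_mulVec_mono (le_algebraMap_det_of_one_le hM) x

lemma dotProduct_mulVec_conjTranspose_mul_mul (S M : Matrix n n ℝ) (x : n → ℝ) :
    x ⬝ᵥ (Sᴴ * M * S) *ᵥ x = (S *ᵥ x) ⬝ᵥ M *ᵥ (S *ᵥ x) := by
  rw [conjTranspose_eq_transpose_of_trivial, ← mulVec_mulVec, ← mulVec_mulVec, dotProduct_mulVec,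
    vecMul_transpose]

theorem dotProduct_mulVec_le_det_div_mul [DecidableEq n] {A B : Matrix n n ℝ} (hB : B.PosDef)
    (hBA : B ≤ A) (x : n → ℝ) :
    x ⬝ᵥ A *ᵥ x ≤ A.det / B.det * (x ⬝ᵥ B *ᵥ x) := by
  set S := CFC.sqrt B
  have hS : S.IsHermitian := (CFC.sqrt_nonneg B).posSemidef.isHermitian
  have hSS : S * S = B := CFC.sqrt_mul_sqrt_self B hB.posSemidef.nonneg
  have hdetS : S.det * S.det = B.det := by rw [← det_mul, hSS]
  have hSunit : IsUnit S.det := isUnit_iff_ne_zero.mpr fun h => by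
    simp [h, hB.det_pos.ne] at hdetS
  set M := S⁻¹ * A * S⁻¹
  have hM : 1 ≤ M := by
    have := star_left_conjugate_le_conjugate hBA S⁻¹
    rwa [star_eq_conjTranspose, hS.inv.eq, ← hSS, ← mul_assoc, nonsing_inv_mul _ hSunit,
      one_mul, mul_nonsing_inv _ hSunit] at this
  have hA : A = Sᴴ * M * S := by
    simp only [M, hS.eq, ← mul_assoc, mul_nonsing_inv _ hSunit, one_mul]
    rw [mul_assoc, nonsing_inv_mul _ hSunit, mul_one]
  have hB' : B = Sᴴ * 1 * S := by rw [hS.eq, mul_one, hSS]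
  have hdetM : A.det / B.det = M.det := by
    rw [← hdetS, hA, det_mul, det_mul, det_conjTranspose, star_trivial]
    field_simp [hSunit.ne_zero]
  rw [hdetM, hA, hB', dotProduct_mulVec_conjTranspose_mul_mul,
    dotProduct_mulVec_conjTranspose_mul_mul, one_mulVec]
  exact dotProduct_mulVec_le_det_mul hM _

end Matrix

theorem norm_comparison_general (d : ℕ) (A B : Matrix (Fin d) (Fin d) ℝ)
    (hB : B.PosDef) (hAB : (A - B).PosSemidef) (x : Fin d → ℝ) :
    Real.sqrt (x ⬝ᵥ A *ᵥ x) ≤ Real.sqrt (x ⬝ᵥ B *ᵥ x) * Real.sqrt (A.det / B.det) := by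
  have hxB : 0 ≤ x ⬝ᵥ B *ᵥ x := by simpa using hB.posSemidef.dotProduct_mulVec_nonneg x
  rw [← Real.sqrt_mul hxB, mul_comm]
  exact Real.sqrt_le_sqrt (dotProduct_mulVec_le_det_div_mul hB hAB x)

/-- Determinant-ratio norm comparison (Lemma 12 of Abbasi-Yadkori et al.): if `A ⪰ B ≻ 0`
then `‖x‖_A ≤ ‖x‖_B · √(det A / det B)` for every vector `x`. -/
theorem norm_comparison (d : ℕ) (A B : Matrix (Fin d) (Fin d) ℝ)
    (hA : A.PosDef) (hB : B.PosDef) (hAB : (A - B).PosSemidef) (x : Fin d → ℝ) :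
    Real.sqrt (x ⬝ᵥ A *ᵥ x) ≤ Real.sqrt (x ⬝ᵥ B *ᵥ x) * Real.sqrt (A.det / B.det) :=
  norm_comparison_general d A B hB hAB x
end

section
/- Let d ≥ 1, k ≥ 1, H ≥ 1, λ̃ > 0 and λ_y ≥ 0. Let Λ be a real symmetric positive definite d×d matrix such that Λ − λ̃ I and Λ − Σ_{i=1}^{k-1} φ_i φ_iᵀ are both positive semidefinite, where φ_1, …, φ_{k-1} ∈ ℝ^d satisfy ‖φ_i‖₂ ≤ 1. Let c_1, …, c_{k-1} be reals with |c_i| ≤ H + 1, and let η ∈ ℝ^d with ‖η‖₂ ≤ λ_y. Then ‖Λ^{-1}(Σ_{i=1}^{k-1} c_i φ_i + η)‖₂ ≤ 2H √(d(k-1)/λ̃) + λ_y/λ̃. -/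
/-!
Write `x = Λ⁻¹ y`, so that `Λ x = y`. Since `Λ ⪰ λ̃ I`, `λ̃ ‖x‖² ≤ xᵀ Λ x = ⟪x, y⟫`, which by
Cauchy–Schwarz already gives `‖Λ⁻¹ η‖ ≤ ‖η‖ / λ̃` for the noise. For the signal
`y = Σ cᵢ φᵢ`, the quadratic form `t = xᵀ Λ x = Σ cᵢ ⟪φᵢ, x⟫` is at most
`(H + 1) √(k - 1) (Σ ⟪φᵢ, x⟫²)^{1/2}`, and `Λ ⪰ Σ φᵢ φᵢᵀ` bounds the last sum by `t` itself;
hence `t ≤ (H + 1)² (k - 1)` and `‖x‖ ≤ (H + 1) √((k - 1) / λ̃)`. The triangle inequality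
combines the two parts.
-/

open Matrix WithLp

section Euclidean

variable {n : Type*} [Fintype n]

lemma sqrt_sum_sq_eq_norm_toLp (x : n → ℝ) : √(∑ j, x j ^ 2) = ‖toLp 2 x‖ := by
  simp [EuclideanSpace.norm_eq]

lemma dotProduct_self_eq_norm_toLp_sq (x : n → ℝ) : x ⬝ᵥ x = ‖toLp 2 x‖ ^ 2 := by
  rw [← real_inner_self_eq_norm_sq, EuclideanSpace.inner_toLp_toLp, star_trivial]

lemma dotProduct_le_norm_toLp_mul_norm_toLp (x y : n → ℝ) :
    x ⬝ᵥ y ≤ ‖toLp 2 x‖ * ‖toLp 2 y‖ := by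
  simpa [EuclideanSpace.inner_toLp_toLp, dotProduct_comm] using
    real_inner_le_norm (toLp 2 x) (toLp 2 y)

end Euclidean

lemma le_sq_mul_card_of_le_sum_mul {ι : Type*} [Fintype ι] {a b : ι → ℝ} {C t : ℝ}
    (hb : ∀ i, |b i| ≤ C) (ht : t ≤ ∑ i, b i * a i) (ha : ∑ i, a i ^ 2 ≤ t) :
    t ≤ C ^ 2 * Fintype.card ι := by
  have ht0 : 0 ≤ t := (Finset.sum_nonneg fun i _ => sq_nonneg (a i)).trans ha
  have h_abs : t ≤ C * ∑ i, |a i| := by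
    refine ht.trans ?_
    rw [Finset.mul_sum]
    refine Finset.sum_le_sum fun i _ => ?_
    calc b i * a i ≤ |b i| * |a i| := by rw [← abs_mul]; exact le_abs_self _
      _ ≤ C * |a i| := by gcongr; exact hb i
  have h_cs : (∑ i, |a i|) ^ 2 ≤ Fintype.card ι * t := by
    refine (sq_sum_le_card_mul_sum_sq (s := Finset.univ) (f := fun i => |a i|)).trans ?_
    simp only [sq_abs, Finset.card_univ]
    gcongr
  have h_sq : t * t ≤ C ^ 2 * Fintype.card ι * t :=
    calc t * t = t ^ 2 := (sq t).symm
      _ ≤ (C * ∑ i, |a i|) ^ 2 := pow_le_pow_left₀ ht0 h_abs 2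
      _ = C ^ 2 * (∑ i, |a i|) ^ 2 := mul_pow _ _ _
      _ ≤ C ^ 2 * (Fintype.card ι * t) := by gcongr
      _ = C ^ 2 * Fintype.card ι * t := by ring
  rcases ht0.eq_or_lt with rfl | ht_pos
  · positivity
  · exact le_of_mul_le_mul_right h_sq ht_pos

namespace Matrix

variable {n : Type*} {A : Matrix n n ℝ} {c : ℝ}

lemma mulVec_nonsing_inv_mulVec {α : Type*} [CommRing α] [Fintype n] [DecidableEq n]
    {M : Matrix n n α} (hM : IsUnit M.det) (y : n → α) : M *ᵥ (M⁻¹ *ᵥ y) = y := by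
  rw [mulVec_mulVec, mul_nonsing_inv M hM, one_mulVec]

lemma PosSemidef.posDef_of_sub_smul_one [DecidableEq n] (h : (A - c • 1).PosSemidef)
    (hc : 0 < c) : A.PosDef := by
  simpa using PosDef.posSemidef_add h (PosDef.one.smul hc)

lemma PosSemidef.isUnit_det_of_sub_smul_one [Fintype n] [DecidableEq n]
    (h : (A - c • 1).PosSemidef) (hc : 0 < c) : IsUnit A.det :=
  (isUnit_iff_isUnit_det A).mp (h.posDef_of_sub_smul_one hc).isUnit

lemma PosSemidef.mul_norm_toLp_sq_le [Fintype n] [DecidableEq n] (h : (A - c • 1).PosSemidef)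
    (x : n → ℝ) : c * ‖toLp 2 x‖ ^ 2 ≤ x ⬝ᵥ (A *ᵥ x) := by
  have := h.dotProduct_mulVec_nonneg x
  rw [sub_mulVec, smul_mulVec, one_mulVec, star_trivial, dotProduct_sub, dotProduct_smul,
    smul_eq_mul, dotProduct_self_eq_norm_toLp_sq] at this
  linarith

lemma PosSemidef.sum_sq_dotProduct_le [Fintype n] {ι : Type*} [Fintype ι] {φ : ι → n → ℝ}
    (h : (A - ∑ i, vecMulVec (φ i) (φ i)).PosSemidef) (x : n → ℝ) :
    ∑ i, (φ i ⬝ᵥ x) ^ 2 ≤ x ⬝ᵥ (A *ᵥ x) := by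
  have := h.dotProduct_mulVec_nonneg x
  simp only [sub_mulVec, sum_mulVec, vecMulVec_mulVec, star_trivial, dotProduct_sub,
    dotProduct_sum, dotProduct_smul] at this
  have h_term : ∀ i, MulOpposite.op (φ i ⬝ᵥ x) • (x ⬝ᵥ φ i) = (φ i ⬝ᵥ x) ^ 2 := fun i => by
    rw [op_smul_eq_smul, smul_eq_mul, dotProduct_comm, sq]
  simp only [h_term] at this
  linarith

lemma PosSemidef.norm_toLp_inv_mulVec_le [Fintype n] [DecidableEq n]
    (h : (A - c • 1).PosSemidef) (hc : 0 < c) (y : n → ℝ) :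
    ‖toLp 2 (A⁻¹ *ᵥ y)‖ ≤ ‖toLp 2 y‖ / c := by
  set x := A⁻¹ *ᵥ y
  have h_quad : c * ‖toLp 2 x‖ ^ 2 ≤ ‖toLp 2 x‖ * ‖toLp 2 y‖ :=
    calc c * ‖toLp 2 x‖ ^ 2 ≤ x ⬝ᵥ (A *ᵥ x) := h.mul_norm_toLp_sq_le x
      _ = x ⬝ᵥ y := by rw [mulVec_nonsing_inv_mulVec (h.isUnit_det_of_sub_smul_one hc)]
      _ ≤ ‖toLp 2 x‖ * ‖toLp 2 y‖ := dotProduct_le_norm_toLp_mul_norm_toLp x y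
  rw [le_div_iff₀ hc]
  rcases (norm_nonneg (toLp 2 x)).eq_or_lt with h0 | hpos
  · rw [← h0]; simp
  · nlinarith

lemma PosSemidef.norm_toLp_inv_mulVec_sum_smul_le [Fintype n] [DecidableEq n]
    {ι : Type*} [Fintype ι] {φ : ι → n → ℝ} {b : ι → ℝ} {C : ℝ}
    (h : (A - c • 1).PosSemidef) (hc : 0 < c)
    (hdom : (A - ∑ i, vecMulVec (φ i) (φ i)).PosSemidef) (hC : 0 ≤ C) (hb : ∀ i, |b i| ≤ C) :
    ‖toLp 2 (A⁻¹ *ᵥ ∑ i, b i • φ i)‖ ≤ C * √(Fintype.card ι / c) := by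
  set x := A⁻¹ *ᵥ ∑ i, b i • φ i
  have h_quad : x ⬝ᵥ (A *ᵥ x) = ∑ i, b i * (φ i ⬝ᵥ x) := by
    rw [mulVec_nonsing_inv_mulVec (h.isUnit_det_of_sub_smul_one hc), dotProduct_sum]
    refine Finset.sum_congr rfl fun i _ => ?_
    rw [dotProduct_smul, smul_eq_mul, dotProduct_comm]
  have h_le : x ⬝ᵥ (A *ᵥ x) ≤ C ^ 2 * Fintype.card ι :=
    le_sq_mul_card_of_le_sum_mul hb h_quad.le (hdom.sum_sq_dotProduct_le x)
  have h_norm : c * ‖toLp 2 x‖ ^ 2 ≤ C ^ 2 * Fintype.card ι :=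
    (h.mul_norm_toLp_sq_le x).trans h_le
  rw [← Real.sqrt_sq hC, ← Real.sqrt_mul (sq_nonneg C),
    Real.le_sqrt (norm_nonneg _) (by positivity), mul_div_assoc', le_div_iff₀ hc]
  linarith

end Matrix

theorem weight_norm_bound_general (d k : ℕ) (hd : 1 ≤ d) (hk : 1 ≤ k)
    (H lam lamy : ℝ) (hH : 1 ≤ H) (hlam : 0 < lam)
    (Λ : Matrix (Fin d) (Fin d) ℝ)
    (hreg : (Λ - lam • (1 : Matrix (Fin d) (Fin d) ℝ)).PosSemidef)
    (φ : Fin (k - 1) → Fin d → ℝ)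
    (hdom : (Λ - ∑ i, Matrix.vecMulVec (φ i) (φ i)).PosSemidef)
    (c : Fin (k - 1) → ℝ) (hc : ∀ i, |c i| ≤ H + 1)
    (η : Fin d → ℝ) (hη : Real.sqrt (∑ j, η j ^ 2) ≤ lamy) :
    Real.sqrt (∑ j, (Λ⁻¹ *ᵥ ((∑ i, c i • φ i) + η)) j ^ 2) ≤
      2 * H * Real.sqrt ((d : ℝ) * ((k : ℝ) - 1) / lam) + lamy / lam := by
  rw [sqrt_sum_sq_eq_norm_toLp] at hη ⊢
  have h_signal := hreg.norm_toLp_inv_mulVec_sum_smul_le hlam hdom (by linarith) hc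
  have h_noise := hreg.norm_toLp_inv_mulVec_le hlam η
  have h_card : (Fintype.card (Fin (k - 1)) : ℝ) ≤ d * ((k : ℝ) - 1) := by
    rw [Fintype.card_fin, Nat.cast_sub hk, Nat.cast_one]
    have hd' : (1 : ℝ) ≤ d := by exact_mod_cast hd
    have hk' : (0 : ℝ) ≤ k - 1 := by rw [sub_nonneg]; exact_mod_cast hk
    nlinarith
  calc ‖toLp 2 (Λ⁻¹ *ᵥ ((∑ i, c i • φ i) + η))‖
      ≤ ‖toLp 2 (Λ⁻¹ *ᵥ ∑ i, c i • φ i)‖ + ‖toLp 2 (Λ⁻¹ *ᵥ η)‖ := by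
        rw [mulVec_add, toLp_add]; exact norm_add_le _ _
    _ ≤ (H + 1) * √(Fintype.card (Fin (k - 1)) / lam) + ‖toLp 2 η‖ / lam :=
        add_le_add h_signal h_noise
    _ ≤ 2 * H * √(d * ((k : ℝ) - 1) / lam) + lamy / lam := by
        gcongr
        linarith

/-- Bound on the norm of the private regression weights
`w = Λ^{-1}(Σ c_i φ_i + η)` (Lemma B.2 of Jin et al. 2020, privatized version):
if `Λ ⪰ λ̃ I`, `Λ` dominates the empirical Gram matrix `Σ φ_i φ_iᵀ`, targets satisfy
`|c_i| ≤ H + 1`, and the noise satisfies `‖η‖₂ ≤ λ_y`, then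
`‖w‖₂ ≤ 2H √(d(k-1)/λ̃) + λ_y/λ̃`. -/
theorem weight_norm_bound (d k : ℕ) (hd : 1 ≤ d) (hk : 1 ≤ k)
    (H lam lamy : ℝ) (hH : 1 ≤ H) (hlam : 0 < lam) (hlamy : 0 ≤ lamy)
    (Λ : Matrix (Fin d) (Fin d) ℝ) (hΛ : Λ.PosDef)
    (hreg : (Λ - lam • (1 : Matrix (Fin d) (Fin d) ℝ)).PosSemidef)
    (φ : Fin (k - 1) → Fin d → ℝ)
    (hφ : ∀ i, Real.sqrt (∑ j, φ i j ^ 2) ≤ 1)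
    (hdom : (Λ - ∑ i, Matrix.vecMulVec (φ i) (φ i)).PosSemidef)
    (c : Fin (k - 1) → ℝ) (hc : ∀ i, |c i| ≤ H + 1)
    (η : Fin d → ℝ) (hη : Real.sqrt (∑ j, η j ^ 2) ≤ lamy) :
    Real.sqrt (∑ j, (Λ⁻¹ *ᵥ ((∑ i, c i • φ i) + η)) j ^ 2) ≤
      2 * H * Real.sqrt ((d : ℝ) * ((k : ℝ) - 1) / lam) + lamy / lam :=
  weight_norm_bound_general d k hd hk H lam lamy hH hlam Λ hreg φ hdom c hc η hη
end

section
/- Let U be a chi-squared random variable with d degrees of freedom, i.e., distributed as the sum of squares of d independent standard Gaussian random variables (equivalently, a Gamma distribution with shape d/2 and rate 1/2). Then for any α ∈ (0,1), P( U ≥ d + 2√(d log(1/α)) + 2 log(1/α) ) ≤ α. -/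
/-!
Chernoff's method. For a standard Gaussian `Z` and `l < 1/2`, `E exp(l Z²) = (1 - 2l)^(-1/2)`,
so a sum `U` of `d` independent squares satisfies
`P(U ≥ t) ≤ exp(-l t) (1 - 2l)^(-d/2)`. Writing the threshold as `t = d (1 + 2s + 2s²)` with
`s = √(x/d)` and taking `1 - 2l = 1 / (1 + 2s + 2s²)`, the bound becomes
`exp(-d (s + s²)) (1 + 2s + 2s²)^(d/2)`, and `1 + 2s + 2s² ≤ exp(2s)` turns it into
`exp(-d s²) = exp(-x)`.
-/

open MeasureTheory ProbabilityTheory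
open scoped BigOperators ENNReal

open Real

lemma Real.sqrt_one_add_two_mul_add_two_mul_sq_le_exp {s : ℝ} (hs : 0 ≤ s) :
    √(1 + 2 * s + 2 * s ^ 2) ≤ exp s := by
  rw [sqrt_le_iff, ← exp_nat_mul]
  refine ⟨(exp_pos s).le, ?_⟩
  have := quadratic_le_exp_of_nonneg (mul_nonneg zero_le_two hs)
  push_cast
  linarith

namespace ProbabilityTheory

/-- For `l ≥ 1/2` both sides are `0`: the integrand is not integrable and `√` of a negative
number is `0`. -/
lemma mgf_sq_gaussianReal (l : ℝ) :
    mgf (fun x ↦ x ^ 2) (gaussianReal 0 1) l = (√(1 - 2 * l))⁻¹ := by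
  have hdensity : ∀ x : ℝ, gaussianPDFReal 0 1 x • exp (l * x ^ 2)
      = (√(2 * π))⁻¹ * exp (-(1 / 2 - l) * x ^ 2) := fun x ↦ by
    simp only [gaussianPDFReal, smul_eq_mul, NNReal.coe_one, mul_one, sub_zero, mul_assoc,
      ← exp_add]
    ring_nf
  rw [mgf, integral_gaussianReal_eq_integral_smul one_ne_zero]
  simp_rw [hdensity]
  rw [integral_const_mul, integral_gaussian, ← sqrt_inv, ← sqrt_inv, ← sqrt_mul (by positivity)]
  congr 1
  field_simp

variable {Ω ι : Type*} [MeasurableSpace Ω] {P : Measure Ω}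

lemma mgf_sq_of_map_eq_gaussianReal {X : Ω → ℝ} (hX : P.map X = gaussianReal 0 1) (l : ℝ) :
    mgf (fun ω ↦ X ω ^ 2) P l = (√(1 - 2 * l))⁻¹ := by
  have hXmeas : AEMeasurable X P := .of_map_ne_zero (by simp [hX, NeZero.ne])
  rw [← mgf_sq_gaussianReal l, ← hX, mgf_map hXmeas (by fun_prop)]
  rfl

variable [Fintype ι] {v : ι → Ω → ℝ}

lemma mgf_sum_sq_of_iIndepFun (hindep : iIndepFun v P)
    (hgauss : ∀ i, P.map (v i) = gaussianReal 0 1) (l : ℝ) :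
    mgf (fun ω ↦ ∑ i, v i ω ^ 2) P l = (√(1 - 2 * l))⁻¹ ^ Fintype.card ι := by
  have hsq : iIndepFun (fun i ω ↦ v i ω ^ 2) P := hindep.comp _ fun _ ↦ measurable_id.pow_const 2
  have hmeas : ∀ i, AEMeasurable (fun ω ↦ v i ω ^ 2) P := fun i ↦
    (AEMeasurable.of_map_ne_zero (by simp [hgauss i, NeZero.ne])).pow_const 2
  have hsum : (fun ω ↦ ∑ i, v i ω ^ 2) = ∑ i, fun ω ↦ v i ω ^ 2 := by
    ext ω; simp only [Finset.sum_apply]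
  rw [hsum, hsq.mgf_sum₀ hmeas, Finset.prod_congr rfl fun i _ ↦
    mgf_sq_of_map_eq_gaussianReal (hgauss i) l, Finset.prod_const, Finset.card_univ]

lemma measureReal_sum_sq_ge_le_exp_mul (hindep : iIndepFun v P)
    (hgauss : ∀ i, P.map (v i) = gaussianReal 0 1) {l : ℝ} (hl0 : 0 ≤ l) (hl : l < 1 / 2) (t : ℝ) :
    P.real {ω | t ≤ ∑ i, v i ω ^ 2} ≤ exp (-l * t) * (√(1 - 2 * l))⁻¹ ^ Fintype.card ι := by
  have := hindep.isProbabilityMeasure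
  have hmgf := mgf_sum_sq_of_iIndepFun hindep hgauss l
  have hint : Integrable (fun ω ↦ exp (l * ∑ i, v i ω ^ 2)) P := by
    rw [← mgf_pos_iff, hmgf]
    have : 0 < 1 - 2 * l := by linarith
    positivity
  simpa only [hmgf] using measure_ge_le_exp_mul_mgf t hl0 hint

theorem measureReal_sum_sq_ge_le_exp {s : ℝ} (hs : 0 ≤ s) (hindep : iIndepFun v P)
    (hgauss : ∀ i, P.map (v i) = gaussianReal 0 1) :
    P.real {ω | Fintype.card ι * (1 + 2 * s + 2 * s ^ 2) ≤ ∑ i, v i ω ^ 2}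
      ≤ exp (-(Fintype.card ι * s ^ 2)) := by
  set q := 1 + 2 * s + 2 * s ^ 2
  have hq : 0 < q := by positivity
  have hl : (s + s ^ 2) / q < 1 / 2 := by rw [div_lt_iff₀ hq]; linarith
  have hsqrt : (√(1 - 2 * ((s + s ^ 2) / q)))⁻¹ = √q := by
    rw [← sqrt_inv]; congr 1; field_simp; ring
  calc P.real {ω | Fintype.card ι * q ≤ ∑ i, v i ω ^ 2}
      ≤ exp (-((s + s ^ 2) / q) * (Fintype.card ι * q)) * √q ^ Fintype.card ι := by
        simpa only [hsqrt] using measureReal_sum_sq_ge_le_exp_mul hindep hgauss (by positivity) hl _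
    _ ≤ exp (-(Fintype.card ι * (s + s ^ 2))) * exp s ^ Fintype.card ι := by
        gcongr
        · exact le_of_eq (by field_simp)
        · exact sqrt_one_add_two_mul_add_two_mul_sq_le_exp hs
    _ = exp (-(Fintype.card ι * s ^ 2)) := by
        rw [← exp_nat_mul, ← exp_add]; ring_nf

theorem measureReal_sum_sq_ge_le_exp_neg (hd : 0 < Fintype.card ι) {x : ℝ} (hx : 0 ≤ x)
    (hindep : iIndepFun v P) (hgauss : ∀ i, P.map (v i) = gaussianReal 0 1) :
    P.real {ω | Fintype.card ι + 2 * √(Fintype.card ι * x) + 2 * x ≤ ∑ i, v i ω ^ 2}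
      ≤ exp (-x) := by
  have hdpos : (0 : ℝ) < Fintype.card ι := by exact_mod_cast hd
  set s := √(x / Fintype.card ι)
  have hs2 : Fintype.card ι * s ^ 2 = x := by
    rw [sq_sqrt (by positivity)]; field_simp
  have hthreshold : Fintype.card ι + 2 * √(Fintype.card ι * x) + 2 * x
      = Fintype.card ι * (1 + 2 * s + 2 * s ^ 2) := by
    rw [← hs2, show (Fintype.card ι : ℝ) * (Fintype.card ι * s ^ 2) = (Fintype.card ι * s) ^ 2 by
      ring, sqrt_sq (by positivity)]
    ring
  have htail := measureReal_sum_sq_ge_le_exp (sqrt_nonneg (x / Fintype.card ι)) hindep hgauss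
  rwa [← hthreshold, hs2] at htail

end ProbabilityTheory

theorem chi_squared_upper_tail_general {Ω : Type*} [MeasurableSpace Ω]
    (P : Measure Ω) [IsProbabilityMeasure P] (d : ℕ)
    (v : Fin d → Ω → ℝ)
    (hindep : iIndepFun v P)
    (hgauss : ∀ i, P.map (v i) = gaussianReal 0 1)
    (U : Ω → ℝ) (hU : ∀ ω, U ω = ∑ i, v i ω ^ 2)
    (α : ℝ) (hα : α ∈ Set.Ioo (0 : ℝ) 1) :
    P {ω | (d : ℝ) + 2 * Real.sqrt ((d : ℝ) * Real.log (1 / α)) + 2 * Real.log (1 / α) ≤ U ω}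
      ≤ ENNReal.ofReal α := by
  obtain ⟨hα0, hα1⟩ := hα
  have hx : 0 < log (1 / α) := log_pos ((one_lt_div hα0).2 hα1)
  simp_rw [hU]
  rcases Nat.eq_zero_or_pos d with rfl | hd
  · -- `U = 0` lies below the positive threshold `2 log (1/α)`
    simp [(log_neg hα0 hα1).not_ge]
  have htail := measureReal_sum_sq_ge_le_exp_neg (by simpa using hd) hx.le hindep hgauss
  have hexp : exp (-log (1 / α)) = α := by rw [one_div, log_inv, neg_neg, exp_log hα0]
  rw [Fintype.card_fin, hexp, measureReal_def] at htail
  rwa [ENNReal.le_ofReal_iff_toReal_le (measure_ne_top _ _) hα0.le]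

/-- Upper-tail Laurent–Massart inequality for chi-squared random variables: if
`U = Σ_{i<d} v_i²` with `v_i` i.i.d. standard Gaussians, then for `α ∈ (0,1)`,
`P(U ≥ d + 2√(d log(1/α)) + 2 log(1/α)) ≤ α`. -/
theorem chi_squared_upper_tail {Ω : Type*} [MeasurableSpace Ω]
    (P : Measure Ω) [IsProbabilityMeasure P] (d : ℕ)
    (v : Fin d → Ω → ℝ) (hmeas : ∀ i, Measurable (v i))
    (hindep : iIndepFun v P)
    (hgauss : ∀ i, P.map (v i) = gaussianReal 0 1)
    (U : Ω → ℝ) (hU : ∀ ω, U ω = ∑ i, v i ω ^ 2)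
    (α : ℝ) (hα : α ∈ Set.Ioo (0 : ℝ) 1) :
    P {ω | (d : ℝ) + 2 * Real.sqrt ((d : ℝ) * Real.log (1 / α)) + 2 * Real.log (1 / α) ≤ U ω}
      ≤ ENNReal.ofReal α :=
  chi_squared_upper_tail_general P d v hindep hgauss U hU α hα
end

section
/- Let μ, ν ∈ ℝ, σ > 0, and α ∈ (1,∞). Let P be the Gaussian measure on ℝ with mean μ and variance σ², and Q the Gaussian measure with mean ν and variance σ². Then P is absolutely continuous with respect to Q and (α−1)^{-1} · log ∫ (dP/dQ)(x)^α dQ(x) = α (μ − ν)² / (2σ²). -/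
open MeasureTheory ProbabilityTheory
open scoped ENNReal NNReal

/-- Rényi divergence between Gaussians with common variance: for `P = N(μ, σ²)` and
`Q = N(ν, σ²)`, `P ≪ Q` and `D_α(P‖Q) = (α−1)⁻¹ log ∫ (dP/dQ)^α dQ = α(μ−ν)²/(2σ²)`
for every `α ∈ (1,∞)`. -/
theorem renyi_gaussian (μ ν σ : ℝ) (hσ : 0 < σ) (α : ℝ) (hα : 1 < α) :
    gaussianReal μ ((σ ^ 2).toNNReal) ≪ gaussianReal ν ((σ ^ 2).toNNReal) ∧
    (α - 1)⁻¹ * Real.log (∫ x,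
        (((gaussianReal μ ((σ ^ 2).toNNReal)).rnDeriv
          (gaussianReal ν ((σ ^ 2).toNNReal))) x).toReal ^ α
        ∂(gaussianReal ν ((σ ^ 2).toNNReal))) =
      α * (μ - ν) ^ 2 / (2 * σ ^ 2) := by
  have hσ2 : (0:ℝ) < σ ^ 2 := by positivity
  set v : ℝ≥0 := (σ ^ 2).toNNReal with hv_def
  have hv : v ≠ 0 := by
    simp only [hv_def, ne_eq, Real.toNNReal_eq_zero, not_le]
    exact hσ2
  have hvc : (v : ℝ) = σ ^ 2 := Real.coe_toNNReal _ hσ2.le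
  set P := gaussianReal μ v with hP
  set Q := gaussianReal ν v with hQdef
  have hPQ : P ≪ Q :=
    (gaussianReal_absolutelyContinuous μ hv).trans
      (gaussianReal_absolutelyContinuous' ν hv)
  refine ⟨hPQ, ?_⟩
  have hQ : Q = volume.withDensity (gaussianPDF ν v) := gaussianReal_of_var_ne_zero ν hv
  -- identify the RN derivative a.e.
  have h1 : P.rnDeriv Q =ᵐ[volume]
      fun x => (gaussianPDF ν v x)⁻¹ * P.rnDeriv volume x := by
    rw [hQ]
    exact Measure.rnDeriv_withDensity_right P volume
      (measurable_gaussianPDF ν v).aemeasurable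
      (ae_of_all _ fun x => (gaussianPDF_pos ν hv x).ne')
      (ae_of_all _ fun _ => ENNReal.ofReal_ne_top)
  have h2 : P.rnDeriv volume =ᵐ[volume] gaussianPDF μ v := rnDeriv_gaussianReal μ v
  have h3 : P.rnDeriv Q =ᵐ[volume]
      fun x => (gaussianPDF ν v x)⁻¹ * gaussianPDF μ v x := by
    filter_upwards [h1, h2] with x hx1 hx2
    rw [hx1, hx2]
  have h4 : P.rnDeriv Q =ᵐ[Q]
      fun x => (gaussianPDF ν v x)⁻¹ * gaussianPDF μ v x :=
    (gaussianReal_absolutelyContinuous ν hv).ae_eq h3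
  -- rewrite the integral pointwise
  have hint1 : (∫ x, (P.rnDeriv Q x).toReal ^ α ∂Q)
      = ∫ x, ((gaussianPDFReal ν v x)⁻¹ * gaussianPDFReal μ v x) ^ α ∂Q := by
    refine integral_congr_ae ?_
    filter_upwards [h4] with x hx
    rw [hx]
    congr 1
    rw [ENNReal.toReal_mul, ENNReal.toReal_inv]
    simp only [gaussianPDF]
    rw [ENNReal.toReal_ofReal (gaussianPDFReal_nonneg _ _ _),
      ENNReal.toReal_ofReal (gaussianPDFReal_nonneg _ _ _)]
  -- unfold the withDensity integral
  have hmeas : Measurable fun x => (gaussianPDFReal ν v x).toNNReal :=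
    (measurable_gaussianPDFReal ν v).real_toNNReal
  have hQ' : Q = volume.withDensity (fun x => ((gaussianPDFReal ν v x).toNNReal : ℝ≥0∞)) := hQ
  have hint2 : (∫ x, ((gaussianPDFReal ν v x)⁻¹ * gaussianPDFReal μ v x) ^ α ∂Q)
      = ∫ x, gaussianPDFReal ν v x *
          ((gaussianPDFReal ν v x)⁻¹ * gaussianPDFReal μ v x) ^ α := by
    rw [hQ', integral_withDensity_eq_integral_smul hmeas]
    refine integral_congr_ae (ae_of_all _ fun x => ?_)
    simp only [NNReal.smul_def]
    rw [Real.coe_toNNReal _ (gaussianPDFReal_nonneg _ _ _), smul_eq_mul]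
  -- pointwise computation: complete the square
  set K : ℝ := α * (α - 1) * (μ - ν) ^ 2 / (2 * σ ^ 2) with hK
  set m : ℝ := ν + α * (μ - ν) with hm
  have hpoint : ∀ x : ℝ, gaussianPDFReal ν v x *
      ((gaussianPDFReal ν v x)⁻¹ * gaussianPDFReal μ v x) ^ α
      = Real.exp K * gaussianPDFReal m v x := by
    intro x
    simp only [gaussianPDFReal, hvc]
    have hD : (0:ℝ) < Real.sqrt (2 * Real.pi * σ ^ 2) := by
      apply Real.sqrt_pos.mpr; positivity
    have h5 : ((Real.sqrt (2 * Real.pi * σ ^ 2))⁻¹ * Real.exp (-(x - ν) ^ 2 / (2 * σ ^ 2)))⁻¹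
        * ((Real.sqrt (2 * Real.pi * σ ^ 2))⁻¹ * Real.exp (-(x - μ) ^ 2 / (2 * σ ^ 2)))
        = Real.exp (-(x - μ) ^ 2 / (2 * σ ^ 2) - (-(x - ν) ^ 2 / (2 * σ ^ 2))) := by
      rw [Real.exp_sub]
      field_simp
    rw [h5, ← Real.exp_mul]
    have h6 : Real.exp K * ((Real.sqrt (2 * Real.pi * σ ^ 2))⁻¹
        * Real.exp (-(x - m) ^ 2 / (2 * σ ^ 2)))
        = (Real.sqrt (2 * Real.pi * σ ^ 2))⁻¹
          * Real.exp (-(x - ν) ^ 2 / (2 * σ ^ 2)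
            + (-(x - μ) ^ 2 / (2 * σ ^ 2) - -(x - ν) ^ 2 / (2 * σ ^ 2)) * α) := by
      have h7 : K + -(x - m) ^ 2 / (2 * σ ^ 2)
          = -(x - ν) ^ 2 / (2 * σ ^ 2)
            + (-(x - μ) ^ 2 / (2 * σ ^ 2) - -(x - ν) ^ 2 / (2 * σ ^ 2)) * α := by
        rw [hK, hm]
        field_simp
        ring
      rw [← h7, Real.exp_add]
      ring
    rw [h6, mul_assoc, ← Real.exp_add]
  have hint3 : (∫ x, gaussianPDFReal ν v x *
      ((gaussianPDFReal ν v x)⁻¹ * gaussianPDFReal μ v x) ^ α) = Real.exp K := by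
    simp_rw [hpoint]
    rw [integral_const_mul, integral_gaussianPDFReal_eq_one m hv, mul_one]
  rw [hint1, hint2, hint3, Real.log_exp, hK]
  have hα1 : α - 1 ≠ 0 := sub_ne_zero.mpr hα.ne'
  field_simp
end

section
/- Let S be a set, 𝒜 a nonempty finite set, d ≥ 1, H > 0, and φ : S × 𝒜 → ℝ^d a map with ‖φ(x,a)‖₂ ≤ 1 for all (x,a). For a vector w ∈ ℝ^d and a symmetric positive semidefinite d×d matrix A, define V_{w,A} : S → ℝ by V_{w,A}(x) = min{ max_{a∈𝒜} ( ⟨w, φ(x,a)⟩ + √(φ(x,a)ᵀ A φ(x,a)) ), H }. Let L > 0, B > 0, λ̃ > 0, and ε > 0. Then there exists a finite set C of functions from S to ℝ, each of the form V_{w',A'} with ‖w'‖₂ ≤ L and A' symmetric positive semidefinite with Frobenius norm ‖A'‖_F ≤ √d B²/λ̃, such that |C| ≤ (1 + 4L/ε)^d · (1 + 8√d B²/(λ̃ ε²))^{d²}, and for every w with ‖w‖₂ ≤ L and every symmetric positive semidefinite A with ‖A‖_F ≤ √d B²/λ̃ there is V' ∈ C with sup_{x∈S} |V_{w,A}(x)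 − V'(x)| ≤ ε. -/
/-!
`V_{w,A}(x)` is 1-Lipschitz in `w` for the Euclidean norm (Cauchy–Schwarz and `‖φ‖ ≤ 1`) and
depends on `A` only through `√‖A - A'‖_F`, since `|√a - √b| ≤ √|a - b|` and
`|φᵀ (A - A') φ| ≤ ‖A - A'‖_F ‖φ‖²`; taking `max` over actions and `min` with `H` preserves both
bounds. Hence an `ε/2`-net of the ball of radius `L` and an `ε²/4`-net of the positive
semidefinite matrices of Frobenius norm at most `R` give an `ε`-cover of the class. Maximal
separated subsets are such nets, and a volume comparison of disjoint balls bounds the size of an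
`r`-separated subset of a ball of radius `R` in an `n`-dimensional space by `(1 + 2R/r)ⁿ`.
-/

open scoped Matrix NNReal ENNReal
open MeasureTheory Metric Module WithLp

attribute [local instance] Matrix.frobeniusNormedAddCommGroup Matrix.frobeniusNormedSpace

section Packing

variable {E : Type*} [NormedAddCommGroup E] [NormedSpace ℝ E] [FiniteDimensional ℝ E]

theorem Metric.IsSeparated.card_le_of_subset_closedBall {ε : ℝ≥0} (hε : 0 < ε) {x : E} {R : ℝ}
    (hR : 0 ≤ R) {t : Finset E} (hsep : IsSeparated ε (t : Set E))
    (ht : (t : Set E) ⊆ closedBall x R) :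
    (t.card : ℝ) ≤ (1 + 2 * R / ε) ^ finrank ℝ E := by
  let _ : MeasurableSpace E := borel E
  have _ : BorelSpace E := ⟨rfl⟩
  let μ : Measure E := Measure.addHaar
  set r : ℝ := ε / 2
  have hr : 0 < r := by positivity
  have hdisj : (t : Set E).PairwiseDisjoint fun y => closedBall y r := by
    intro y hy z hz hyz
    refine closedBall_disjoint_closedBall ?_
    have : (ε : ℝ≥0∞) < edist y z := hsep hy hz hyz
    rw [edist_nndist, ENNReal.coe_lt_coe, ← NNReal.coe_lt_coe, coe_nndist] at this
    rwa [add_halves]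
  have hunion : (⋃ y ∈ t, closedBall y r) ⊆ closedBall x (R + r) := by
    refine Set.iUnion₂_subset fun y hy => closedBall_subset_closedBall' ?_
    linarith [mem_closedBall.1 (ht hy)]
  have hvol : (t.card : ℝ≥0∞) * ENNReal.ofReal (r ^ finrank ℝ E) * μ (closedBall 0 1)
      ≤ ENNReal.ofReal ((R + r) ^ finrank ℝ E) * μ (closedBall 0 1) := by
    calc (t.card : ℝ≥0∞) * ENNReal.ofReal (r ^ finrank ℝ E) * μ (closedBall 0 1)
        = ∑ y ∈ t, μ (closedBall y r) := by
          simp [Measure.addHaar_closedBall' μ _ hr.le, mul_assoc]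
      _ = μ (⋃ y ∈ t, closedBall y r) :=
          (measure_biUnion_finset hdisj fun y _ => measurableSet_closedBall).symm
      _ ≤ μ (closedBall x (R + r)) := measure_mono hunion
      _ = ENNReal.ofReal ((R + r) ^ finrank ℝ E) * μ (closedBall 0 1) :=
          Measure.addHaar_closedBall' μ _ (by positivity)
  have hreal : (t.card : ℝ) * r ^ finrank ℝ E ≤ (R + r) ^ finrank ℝ E := by
    rwa [ENNReal.mul_le_mul_iff_left (measure_closedBall_pos μ 0 one_pos).ne'
      measure_closedBall_lt_top.ne, ← ENNReal.ofReal_natCast,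
      ← ENNReal.ofReal_mul (by positivity), ENNReal.ofReal_le_ofReal_iff (by positivity)] at hvol
  calc (t.card : ℝ) ≤ (R + r) ^ finrank ℝ E / r ^ finrank ℝ E :=
        (le_div_iff₀ (by positivity)).2 hreal
    _ = (1 + 2 * R / ε) ^ finrank ℝ E := by
      rw [← div_pow]
      congr 1
      field_simp
      ring

theorem Metric.packingNumber_ne_top_of_subset_closedBall {ε : ℝ≥0} (hε : 0 < ε) {x : E} {R : ℝ}
    (hR : 0 ≤ R) {s : Set E} (hs : s ⊆ closedBall x R) : packingNumber ε s ≠ ⊤ := by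
  set b := (1 + 2 * R / ε) ^ finrank ℝ E
  refine ne_top_of_le_ne_top (ENat.natCast_ne_top ⌊b⌋₊)
    (iSup₂_le fun C hCs => iSup_le fun hC => ?_)
  by_contra! hlt
  obtain ⟨T, hTC, hT⟩ := Set.exists_subset_encard_eq (Order.add_one_le_of_lt hlt)
  obtain ⟨T, rfl⟩ := (Set.finite_of_encard_eq_coe hT).exists_finset_coe
  rw [Set.encard_coe_eq_coe_finsetCard] at hT
  have hcard := (hC.subset hTC).card_le_of_subset_closedBall hε hR (hTC.trans (hCs.trans hs))
  rw [show T.card = ⌊b⌋₊ + 1 by exact_mod_cast hT, Nat.cast_succ] at hcard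
  exact hcard.not_gt (Nat.lt_floor_add_one b)

theorem Metric.exists_finset_isCover_card_le {ε : ℝ≥0} (hε : 0 < ε) {x : E} {R : ℝ}
    (hR : 0 ≤ R) {s : Set E} (hs : s ⊆ closedBall x R) :
    ∃ N : Finset E, ↑N ⊆ s ∧ IsCover ε s N ∧ (N.card : ℝ) ≤ (1 + 2 * R / ε) ^ finrank ℝ E := by
  have hpack := packingNumber_ne_top_of_subset_closedBall hε hR hs
  have hfin : (maximalSeparatedSet ε s).Finite := by
    rw [← Set.encard_ne_top_iff, encard_maximalSeparatedSet hpack]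
    exact hpack
  refine ⟨hfin.toFinset, by simpa using maximalSeparatedSet_subset,
    by simpa using isCover_maximalSeparatedSet hpack, ?_⟩
  exact IsSeparated.card_le_of_subset_closedBall hε hR
    (by simpa using isSeparated_maximalSeparatedSet)
    (by simpa using maximalSeparatedSet_subset.trans hs)

end Packing

theorem Metric.IsCover.exists_dist_le {X : Type*} [PseudoMetricSpace X] {ε : ℝ≥0} {s N : Set X}
    (h : IsCover ε s N) {x : X} (hx : x ∈ s) : ∃ y ∈ N, dist x y ≤ ε := by
  simpa using isCover_iff_subset_iUnion_closedBall.1 h hx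

theorem Finset.abs_sup'_sub_sup'_le {α ι : Type*} [AddCommGroup α] [LinearOrder α]
    [IsOrderedAddMonoid α] {s : Finset ι} (hs : s.Nonempty) {f g : ι → α} {c : α}
    (h : ∀ i ∈ s, |f i - g i| ≤ c) : |s.sup' hs f - s.sup' hs g| ≤ c := by
  rw [abs_sub_le_iff, sub_le_iff_le_add, sub_le_iff_le_add]
  constructor <;> refine Finset.sup'_le _ _ fun i hi => ?_
  · exact (sub_le_iff_le_add.1 (abs_sub_le_iff.1 (h i hi)).1).trans
      (add_le_add_right (s.le_sup' g hi) c)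
  · exact (sub_le_iff_le_add.1 (abs_sub_le_iff.1 (h i hi)).2).trans
      (add_le_add_right (s.le_sup' f hi) c)

theorem Real.abs_sqrt_sub_sqrt_le {a b : ℝ} (ha : 0 ≤ a) (hb : 0 ≤ b) :
    |√a - √b| ≤ √|a - b| := by
  have hsum : |√a - √b| ≤ √a + √b := by
    simpa [abs_of_nonneg (Real.sqrt_nonneg _)] using abs_sub (√a) (√b)
  refine Real.abs_le_sqrt ?_
  calc (√a - √b) ^ 2 = |√a - √b| * |√a - √b| := by rw [sq, abs_mul_abs_self]
    _ ≤ |√a - √b| * (√a + √b) := by gcongr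
    _ = |(√a - √b) * (√a + √b)| := by rw [abs_mul, abs_of_nonneg (by positivity : 0 ≤ √a + √b)]
    _ = |a - b| := by congr 1; linear_combination Real.sq_sqrt ha - Real.sq_sqrt hb

theorem EuclideanSpace.norm_toLp_eq_sqrt {ι : Type*} [Fintype ι] (v : ι → ℝ) :
    ‖toLp 2 v‖ = √(∑ i, v i ^ 2) := by
  simp [EuclideanSpace.norm_eq]

theorem Matrix.frobenius_norm_eq_sqrt {m n : Type*} [Fintype m] [Fintype n] (A : Matrix m n ℝ) :
    ‖A‖ = √(∑ i, ∑ j, A i j ^ 2) := by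
  simp [Matrix.frobenius_norm_def, Real.sqrt_eq_rpow, Real.norm_eq_abs, sq_abs]

section QuadraticForm

variable {ι : Type*} [Fintype ι]

theorem Matrix.abs_dotProduct_le (v u : ι → ℝ) : |v ⬝ᵥ u| ≤ ‖toLp 2 v‖ * ‖toLp 2 u‖ := by
  simpa [EuclideanSpace.inner_toLp_toLp, mul_comm] using
    abs_real_inner_le_norm (toLp 2 u) (toLp 2 v)

theorem Matrix.abs_dotProduct_mulVec_le (M : Matrix ι ι ℝ) (u : ι → ℝ) :
    |u ⬝ᵥ M *ᵥ u| ≤ ‖M‖ * ‖toLp 2 u‖ ^ 2 := by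
  have h : replicateRow Unit u * M * replicateCol Unit u = of fun _ _ => u ⬝ᵥ M *ᵥ u := by
    rw [Matrix.mul_assoc, ← replicateCol_mulVec, replicateRow_mul_replicateCol]
  calc |u ⬝ᵥ M *ᵥ u| = ‖replicateRow Unit u * M * replicateCol Unit u‖ := by
        rw [h, frobenius_norm_eq_sqrt]
        simp [Real.sqrt_sq_eq_abs]
    _ ≤ ‖replicateRow Unit u‖ * ‖M‖ * ‖replicateCol Unit u‖ :=
        (frobenius_norm_mul _ _).trans (by gcongr; exact frobenius_norm_mul _ _)
    _ = ‖M‖ * ‖toLp 2 u‖ ^ 2 := by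
        rw [frobenius_norm_replicateRow, frobenius_norm_replicateCol]
        ring

theorem Matrix.abs_sqrt_dotProduct_mulVec_sub_le {A A' : Matrix ι ι ℝ} (hA : A.PosSemidef)
    (hA' : A'.PosSemidef) {u : ι → ℝ} (hu : ‖toLp 2 u‖ ≤ 1) :
    |√(u ⬝ᵥ A *ᵥ u) - √(u ⬝ᵥ A' *ᵥ u)| ≤ √‖A - A'‖ := by
  refine (Real.abs_sqrt_sub_sqrt_le (hA.dotProduct_mulVec_nonneg u)
    (hA'.dotProduct_mulVec_nonneg u)).trans (Real.sqrt_le_sqrt ?_)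
  calc |u ⬝ᵥ A *ᵥ u - u ⬝ᵥ A' *ᵥ u| = |u ⬝ᵥ (A - A') *ᵥ u| := by
        rw [sub_mulVec, dotProduct_sub]
    _ ≤ ‖A - A'‖ * ‖toLp 2 u‖ ^ 2 := abs_dotProduct_mulVec_le _ _
    _ ≤ ‖A - A'‖ := mul_le_of_le_one_right (norm_nonneg _) (pow_le_one₀ (norm_nonneg _) hu)

end QuadraticForm

noncomputable def optimisticValue {S 𝒜 ι : Type*} [Fintype 𝒜] [Nonempty 𝒜] [Fintype ι]
    (φ : S → 𝒜 → ι → ℝ) (H : ℝ) (w : ι → ℝ) (A : Matrix ι ι ℝ) (x : S) : ℝ :=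
  min (Finset.univ.sup' Finset.univ_nonempty fun a => w ⬝ᵥ φ x a + √(φ x a ⬝ᵥ A *ᵥ φ x a)) H

theorem abs_optimisticValue_sub_le {S 𝒜 ι : Type*} [Fintype 𝒜] [Nonempty 𝒜] [Fintype ι]
    {φ : S → 𝒜 → ι → ℝ} (hφ : ∀ x a, ‖toLp 2 (φ x a)‖ ≤ 1) (H : ℝ) (w w' : ι → ℝ)
    {A A' : Matrix ι ι ℝ} (hA : A.PosSemidef) (hA' : A'.PosSemidef) (x : S) :
    |optimisticValue φ H w A x - optimisticValue φ H w' A' x| ≤ ‖toLp 2 (w - w')‖ + √‖A - A'‖ := by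
  refine (abs_min_sub_min_le_max _ _ _ _).trans ?_
  rw [sub_self, abs_zero, max_eq_left (abs_nonneg _)]
  refine Finset.abs_sup'_sub_sup'_le _ fun a _ => ?_
  have hlin : |w ⬝ᵥ φ x a - w' ⬝ᵥ φ x a| ≤ ‖toLp 2 (w - w')‖ := by
    rw [← sub_dotProduct]
    exact (Matrix.abs_dotProduct_le _ _).trans
      (mul_le_of_le_one_right (norm_nonneg _) (hφ x a))
  calc _ = |(w ⬝ᵥ φ x a - w' ⬝ᵥ φ x a) + (√(φ x a ⬝ᵥ A *ᵥ φ x a) - √(φ x a ⬝ᵥ A' *ᵥ φ x a))| := by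
        ring_nf
    _ ≤ _ := (abs_add_le _ _).trans
        (add_le_add hlin (Matrix.abs_sqrt_dotProduct_mulVec_sub_le hA hA' (hφ x a)))

theorem exists_optimisticValue_cover {S 𝒜 ι : Type*} [Fintype 𝒜] [Nonempty 𝒜] [Fintype ι]
    {φ : S → 𝒜 → ι → ℝ} (hφ : ∀ x a, ‖toLp 2 (φ x a)‖ ≤ 1) (H : ℝ) {L R ε : ℝ} (hL : 0 ≤ L)
    (hR : 0 ≤ R) (hε : 0 < ε) :
    ∃ C : Finset ((ι → ℝ) × Matrix ι ι ℝ),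
      (∀ p ∈ C, ‖toLp 2 p.1‖ ≤ L ∧ p.2.PosSemidef ∧ ‖p.2‖ ≤ R) ∧
      (C.card : ℝ) ≤ (1 + 4 * L / ε) ^ Fintype.card ι * (1 + 8 * R / ε ^ 2) ^ Fintype.card ι ^ 2 ∧
      ∀ w A, ‖toLp 2 w‖ ≤ L → A.PosSemidef → ‖A‖ ≤ R →
        ∃ p ∈ C, ∀ x, |optimisticValue φ H w A x - optimisticValue φ H p.1 p.2 x| ≤ ε := by
  classical
  lift ε to ℝ≥0 using hε.le
  replace hε : 0 < ε := mod_cast hε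
  obtain ⟨N₁, hN₁s, hN₁, hN₁card⟩ := exists_finset_isCover_card_le (ε := ε / 2)
    (by positivity) hL (subset_refl (closedBall (0 : EuclideanSpace ℝ ι) L))
  obtain ⟨N₂, hN₂s, hN₂, hN₂card⟩ := exists_finset_isCover_card_le (ε := ε ^ 2 / 4)
    (by positivity) hR (s := {A : Matrix ι ι ℝ | A.PosSemidef ∧ ‖A‖ ≤ R})
    fun A hA => mem_closedBall_zero_iff.2 hA.2
  refine ⟨(N₁ ×ˢ N₂).image fun p => (ofLp p.1, p.2), ?_, ?_, ?_⟩
  · simp only [Finset.mem_image, Finset.mem_product]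
    rintro _ ⟨⟨y, M⟩, ⟨hy, hM⟩, rfl⟩
    exact ⟨mem_closedBall_zero_iff.1 (hN₁s hy), hN₂s hM⟩
  · rw [finrank_euclideanSpace] at hN₁card
    rw [Module.finrank_matrix, Module.finrank_self, mul_one, ← sq] at hN₂card
    push_cast at hN₁card hN₂card
    calc (((N₁ ×ˢ N₂).image fun p => (ofLp p.1, p.2)).card : ℝ) ≤ N₁.card * N₂.card := by
          rw [← Nat.cast_mul, ← Finset.card_product]
          exact_mod_cast Finset.card_image_le
      _ ≤ (1 + 2 * L / (ε / 2)) ^ Fintype.card ι *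
            (1 + 2 * R / (ε ^ 2 / 4)) ^ Fintype.card ι ^ 2 := by
          gcongr
      _ = _ := by
          congr 2 <;> field_simp <;> ring
  · intro w A hw hA hAR
    obtain ⟨y, hy, hwy⟩ := hN₁.exists_dist_le (x := toLp 2 w) (mem_closedBall_zero_iff.2 hw)
    obtain ⟨M, hM, hAM⟩ := hN₂.exists_dist_le (x := A) ⟨hA, hAR⟩
    refine ⟨(ofLp y, M), Finset.mem_image.2 ⟨(y, M), Finset.mem_product.2 ⟨hy, hM⟩, rfl⟩,
      fun x => (abs_optimisticValue_sub_le hφ H _ _ hA (hN₂s hM).1 x).trans ?_⟩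
    rw [toLp_sub, toLp_ofLp, ← dist_eq_norm, ← dist_eq_norm]
    push_cast at hwy hAM
    calc dist (toLp 2 w) y + √(dist A M) ≤ ε / 2 + √((ε / 2 : ℝ) ^ 2) := by
          gcongr
          linarith
      _ = ε := by
          rw [Real.sqrt_sq (by positivity)]
          ring

theorem value_class_covering_general {S 𝒜 : Type*} [Fintype 𝒜] [Nonempty 𝒜]
    (d : ℕ) (H : ℝ)
    (φ : S → 𝒜 → Fin d → ℝ)
    (hφ : ∀ x a, Real.sqrt (∑ i, φ x a i ^ 2) ≤ 1)
    (V : (Fin d → ℝ) → Matrix (Fin d) (Fin d) ℝ → S → ℝ)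
    (hV : ∀ w A x, V w A x =
      min (Finset.univ.sup' Finset.univ_nonempty fun a : 𝒜 =>
        (∑ i, w i * φ x a i) + Real.sqrt (φ x a ⬝ᵥ A *ᵥ φ x a)) H)
    (L B lam ε : ℝ) (hL : 0 < L) (hlam : 0 < lam) (hε : 0 < ε) :
    ∃ C : Finset ((Fin d → ℝ) × Matrix (Fin d) (Fin d) ℝ),
      (∀ p ∈ C, Real.sqrt (∑ i, p.1 i ^ 2) ≤ L ∧ p.2.PosSemidef ∧
        Real.sqrt (∑ i, ∑ j, p.2 i j ^ 2) ≤ Real.sqrt d * B ^ 2 / lam) ∧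
      (C.card : ℝ) ≤ (1 + 4 * L / ε) ^ d *
        (1 + 8 * Real.sqrt d * B ^ 2 / (lam * ε ^ 2)) ^ (d ^ 2) ∧
      ∀ w : Fin d → ℝ, ∀ A : Matrix (Fin d) (Fin d) ℝ,
        Real.sqrt (∑ i, w i ^ 2) ≤ L → A.PosSemidef →
        Real.sqrt (∑ i, ∑ j, A i j ^ 2) ≤ Real.sqrt d * B ^ 2 / lam →
        ∃ p ∈ C, ∀ x : S, |V w A x - V p.1 p.2 x| ≤ ε := by
  have hV' : V = optimisticValue φ H := funext₃ hV
  obtain ⟨C, hCmem, hCcard, hCcover⟩ := exists_optimisticValue_cover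
    (fun x a => (EuclideanSpace.norm_toLp_eq_sqrt _).trans_le (hφ x a)) H hL.le
    (by positivity : 0 ≤ √d * B ^ 2 / lam) hε
  rw [Fintype.card_fin] at hCcard
  refine ⟨C, fun p hp => ?_, hCcard.trans_eq (by ring), fun w A hw hA hAR => ?_⟩
  · simpa only [EuclideanSpace.norm_toLp_eq_sqrt, Matrix.frobenius_norm_eq_sqrt] using hCmem p hp
  · rw [hV']
    exact hCcover w A (by rwa [EuclideanSpace.norm_toLp_eq_sqrt]) hA
      (by rwa [Matrix.frobenius_norm_eq_sqrt])

/-- Covering number of the optimistic value-function class (Lemma D.6 of Jin et al.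
2020): the class `V_{w,A}(x) = min{max_a (⟨w, φ(x,a)⟩ + √(φ(x,a)ᵀ A φ(x,a))), H}`
with `‖w‖₂ ≤ L` and `A` symmetric positive semidefinite with `‖A‖_F ≤ √d B²/λ̃` admits
an `ε`-cover (in sup distance) of cardinality at most
`(1 + 4L/ε)^d (1 + 8√d B²/(λ̃ ε²))^{d²}` consisting of functions of the same form. -/
theorem value_class_covering {S 𝒜 : Type*} [Fintype 𝒜] [Nonempty 𝒜]
    (d : ℕ) (hd : 1 ≤ d) (H : ℝ) (hH : 0 < H)
    (φ : S → 𝒜 → Fin d → ℝ)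
    (hφ : ∀ x a, Real.sqrt (∑ i, φ x a i ^ 2) ≤ 1)
    (V : (Fin d → ℝ) → Matrix (Fin d) (Fin d) ℝ → S → ℝ)
    (hV : ∀ w A x, V w A x =
      min (Finset.univ.sup' Finset.univ_nonempty fun a : 𝒜 =>
        (∑ i, w i * φ x a i) + Real.sqrt (φ x a ⬝ᵥ A *ᵥ φ x a)) H)
    (L B lam ε : ℝ) (hL : 0 < L) (hB : 0 < B) (hlam : 0 < lam) (hε : 0 < ε) :
    ∃ C : Finset ((Fin d → ℝ) × Matrix (Fin d) (Fin d) ℝ),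
      (∀ p ∈ C, Real.sqrt (∑ i, p.1 i ^ 2) ≤ L ∧ p.2.PosSemidef ∧
        Real.sqrt (∑ i, ∑ j, p.2 i j ^ 2) ≤ Real.sqrt d * B ^ 2 / lam) ∧
      (C.card : ℝ) ≤ (1 + 4 * L / ε) ^ d *
        (1 + 8 * Real.sqrt d * B ^ 2 / (lam * ε ^ 2)) ^ (d ^ 2) ∧
      ∀ w : Fin d → ℝ, ∀ A : Matrix (Fin d) (Fin d) ℝ,
        Real.sqrt (∑ i, w i ^ 2) ≤ L → A.PosSemidef →
        Real.sqrt (∑ i, ∑ j, A i j ^ 2) ≤ Real.sqrt d * B ^ 2 / lam →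
        ∃ p ∈ C, ∀ x : S, |V w A x - V p.1 p.2 x| ≤ ε :=
  value_class_covering_general d H φ hφ V hV L B lam ε hL hlam hε
end

section
/- Let S be a set, 𝒜 a nonempty finite set, d ≥ 1, H > 0, and φ : S × 𝒜 → ℝ^d a map with ‖φ(x,a)‖₂ ≤ 1 for all (x,a). For a vector w ∈ ℝ^d and a symmetric positive semidefinite d×d matrix A, define V_{w,A} : S → ℝ by V_{w,A}(x) = min{ max_{a∈𝒜} ( ⟨w, φ(x,a)⟩ + √(φ(x,a)ᵀ A φ(x,a)) ), H }. Then for any w₁, w₂ ∈ ℝ^d and any symmetric positive semidefinite matrices A₁, A₂: sup_{x∈S} |V_{w₁,A₁}(x) − V_{w₂,A₂}(x)| ≤ ‖w₁ − w₂‖₂ + √(‖A₁ − A₂‖_F). -/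
open scoped BigOperators Matrix

private lemma sqrt_diff_le {s t : ℝ} (ht : 0 ≤ t) (hts : t ≤ s) :
    Real.sqrt s - Real.sqrt t ≤ Real.sqrt (s - t) := by
  have h : Real.sqrt s ≤ Real.sqrt (s - t) + Real.sqrt t := by
    have h2 : s ≤ (Real.sqrt (s - t) + Real.sqrt t) ^ 2 := by
      have := Real.sq_sqrt (sub_nonneg.2 hts)
      have := Real.sq_sqrt ht
      have hnn : 0 ≤ Real.sqrt (s - t) * Real.sqrt t :=
        mul_nonneg (Real.sqrt_nonneg _) (Real.sqrt_nonneg _)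
      nlinarith
    calc Real.sqrt s ≤ Real.sqrt ((Real.sqrt (s - t) + Real.sqrt t) ^ 2) :=
          Real.sqrt_le_sqrt h2
      _ = Real.sqrt (s - t) + Real.sqrt t :=
          Real.sqrt_sq (by positivity)
  linarith

private lemma abs_sqrt_sub_sqrt {s t : ℝ} (hs : 0 ≤ s) (ht : 0 ≤ t) :
    |Real.sqrt s - Real.sqrt t| ≤ Real.sqrt |s - t| := by
  rcases le_total t s with h | h
  · rw [abs_of_nonneg (sub_nonneg.2 (Real.sqrt_le_sqrt h)),
      abs_of_nonneg (sub_nonneg.2 h)]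
    exact sqrt_diff_le ht h
  · rw [abs_of_nonpos (sub_nonpos.2 (Real.sqrt_le_sqrt h)),
      abs_of_nonpos (sub_nonpos.2 h), neg_sub, neg_sub]
    exact sqrt_diff_le hs h

private lemma abs_sum_mul_le {ι : Type*} (s : Finset ι) (f g : ι → ℝ) :
    |∑ i ∈ s, f i * g i| ≤
      Real.sqrt (∑ i ∈ s, f i ^ 2) * Real.sqrt (∑ i ∈ s, g i ^ 2) := by
  have h := Finset.sum_mul_sq_le_sq_mul_sq s f g
  rw [← Real.sqrt_sq_eq_abs, ← Real.sqrt_mul (Finset.sum_nonneg fun i _ => sq_nonneg (f i))]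
  exact Real.sqrt_le_sqrt h

private lemma abs_sup'_sub_sup' {ι : Type*} [Fintype ι] (hne : Finset.univ.Nonempty (α := ι))
    (f g : ι → ℝ) (c : ℝ) (h : ∀ a, |f a - g a| ≤ c) :
    |Finset.univ.sup' hne f - Finset.univ.sup' hne g| ≤ c := by
  rw [abs_sub_le_iff]
  constructor
  · rw [sub_le_iff_le_add]
    refine Finset.sup'_le _ _ fun a _ => ?_
    have h1 := (abs_sub_le_iff.1 (h a)).1
    have h2 := Finset.le_sup' g (Finset.mem_univ a)
    linarith
  · rw [sub_le_iff_le_add]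
    refine Finset.sup'_le _ _ fun a _ => ?_
    have h1 := (abs_sub_le_iff.1 (h a)).2
    have h2 := Finset.le_sup' f (Finset.mem_univ a)
    linarith

private lemma abs_min_const {p q H : ℝ} : |min p H - min q H| ≤ |p - q| := by
  rcases le_total p H with h1 | h1 <;> rcases le_total q H with h2 | h2 <;>
    rw [abs_sub_le_iff] <;> cases abs_cases (p - q) <;>
    constructor <;>
    simp [min_eq_left, min_eq_right, h1, h2] <;> linarith

/-- Lipschitz-type bound for the optimistic value-function class (used in Lemma D.6 of
Jin et al. 2020): for `V_{w,A}(x) = min{max_a (⟨w, φ(x,a)⟩ + √(φ(x,a)ᵀ A φ(x,a))), H}`,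
`sup_x |V_{w₁,A₁}(x) − V_{w₂,A₂}(x)| ≤ ‖w₁ − w₂‖₂ + √(‖A₁ − A₂‖_F)`. -/
theorem value_class_lipschitz {S 𝒜 : Type*} [Fintype 𝒜] [Nonempty 𝒜]
    (d : ℕ) (hd : 1 ≤ d) (H : ℝ) (hH : 0 < H)
    (φ : S → 𝒜 → Fin d → ℝ)
    (hφ : ∀ x a, Real.sqrt (∑ i, φ x a i ^ 2) ≤ 1)
    (V : (Fin d → ℝ) → Matrix (Fin d) (Fin d) ℝ → S → ℝ)
    (hV : ∀ w A x, V w A x =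
      min (Finset.univ.sup' Finset.univ_nonempty fun a : 𝒜 =>
        (∑ i, w i * φ x a i) + Real.sqrt (φ x a ⬝ᵥ A *ᵥ φ x a)) H)
    (w₁ w₂ : Fin d → ℝ) (A₁ A₂ : Matrix (Fin d) (Fin d) ℝ)
    (hA₁ : A₁.PosSemidef) (hA₂ : A₂.PosSemidef) :
    ∀ x : S, |V w₁ A₁ x - V w₂ A₂ x| ≤
      Real.sqrt (∑ i, (w₁ i - w₂ i) ^ 2) +
      Real.sqrt (Real.sqrt (∑ i, ∑ j, (A₁ i j - A₂ i j) ^ 2)) := by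
  intro x
  set c : ℝ := Real.sqrt (∑ i, (w₁ i - w₂ i) ^ 2) +
      Real.sqrt (Real.sqrt (∑ i, ∑ j, (A₁ i j - A₂ i j) ^ 2)) with hc
  rw [hV, hV]
  refine le_trans abs_min_const ?_
  refine abs_sup'_sub_sup' _ _ _ c fun a => ?_
  -- basic facts about φ
  have hφ2 : (∑ i, φ x a i ^ 2) ≤ 1 := by
    have h := hφ x a
    have h0 : (0:ℝ) ≤ ∑ i, φ x a i ^ 2 := Finset.sum_nonneg fun i _ => sq_nonneg _
    nlinarith [Real.sq_sqrt h0, Real.sqrt_nonneg (∑ i, φ x a i ^ 2)]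
  -- quadratic forms are nonnegative
  have hq₁ : 0 ≤ φ x a ⬝ᵥ A₁ *ᵥ φ x a := hA₁.re_dotProduct_nonneg (φ x a)
  have hq₂ : 0 ≤ φ x a ⬝ᵥ A₂ *ᵥ φ x a := hA₂.re_dotProduct_nonneg (φ x a)
  -- linear part
  have hlin : |(∑ i, w₁ i * φ x a i) - (∑ i, w₂ i * φ x a i)| ≤
      Real.sqrt (∑ i, (w₁ i - w₂ i) ^ 2) := by
    rw [← Finset.sum_sub_distrib]
    simp_rw [← sub_mul]
    calc |∑ i, (w₁ i - w₂ i) * φ x a i|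
        ≤ Real.sqrt (∑ i, (w₁ i - w₂ i) ^ 2) * Real.sqrt (∑ i, φ x a i ^ 2) :=
          abs_sum_mul_le _ _ _
      _ ≤ Real.sqrt (∑ i, (w₁ i - w₂ i) ^ 2) * 1 := by
          exact mul_le_mul_of_nonneg_left (hφ x a) (Real.sqrt_nonneg _)
      _ = _ := mul_one _
  -- quadratic part
  have hquad : |(φ x a ⬝ᵥ A₁ *ᵥ φ x a) - (φ x a ⬝ᵥ A₂ *ᵥ φ x a)| ≤
      Real.sqrt (∑ i, ∑ j, (A₁ i j - A₂ i j) ^ 2) := by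
    have hrw : (φ x a ⬝ᵥ A₁ *ᵥ φ x a) - (φ x a ⬝ᵥ A₂ *ᵥ φ x a) =
        ∑ p : Fin d × Fin d, (A₁ p.1 p.2 - A₂ p.1 p.2) * (φ x a p.1 * φ x a p.2) := by
      rw [Fintype.sum_prod_type]
      simp [dotProduct, Matrix.mulVec, dotProduct, Finset.mul_sum,
        ← Finset.sum_sub_distrib]
      congr 1; funext i; congr 1; funext j; ring
    rw [hrw]
    calc |∑ p : Fin d × Fin d, (A₁ p.1 p.2 - A₂ p.1 p.2) * (φ x a p.1 * φ x a p.2)|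
        ≤ Real.sqrt (∑ p : Fin d × Fin d, (A₁ p.1 p.2 - A₂ p.1 p.2) ^ 2) *
          Real.sqrt (∑ p : Fin d × Fin d, (φ x a p.1 * φ x a p.2) ^ 2) :=
          abs_sum_mul_le _ _ _
      _ ≤ Real.sqrt (∑ i, ∑ j, (A₁ i j - A₂ i j) ^ 2) * 1 := by
          rw [Fintype.sum_prod_type]
          refine mul_le_mul_of_nonneg_left ?_ (Real.sqrt_nonneg _)
          have : (∑ p : Fin d × Fin d, (φ x a p.1 * φ x a p.2) ^ 2) =
              (∑ i, φ x a i ^ 2) * (∑ j, φ x a j ^ 2) := by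
            rw [Fintype.sum_prod_type, Finset.sum_mul_sum]
            congr 1; funext i; congr 1; funext j; ring
          rw [this]
          calc Real.sqrt ((∑ i, φ x a i ^ 2) * (∑ j, φ x a j ^ 2)) ≤ Real.sqrt 1 := by
                refine Real.sqrt_le_sqrt ?_
                have h0 : (0:ℝ) ≤ ∑ i, φ x a i ^ 2 :=
                  Finset.sum_nonneg fun i _ => sq_nonneg _
                nlinarith
            _ = 1 := Real.sqrt_one
      _ = _ := mul_one _
  have hsq : |Real.sqrt (φ x a ⬝ᵥ A₁ *ᵥ φ x a) - Real.sqrt (φ x a ⬝ᵥ A₂ *ᵥ φ x a)| ≤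
      Real.sqrt (Real.sqrt (∑ i, ∑ j, (A₁ i j - A₂ i j) ^ 2)) :=
    (abs_sqrt_sub_sqrt hq₁ hq₂).trans (Real.sqrt_le_sqrt hquad)
  calc |((∑ i, w₁ i * φ x a i) + Real.sqrt (φ x a ⬝ᵥ A₁ *ᵥ φ x a)) -
        ((∑ i, w₂ i * φ x a i) + Real.sqrt (φ x a ⬝ᵥ A₂ *ᵥ φ x a))|
      ≤ |(∑ i, w₁ i * φ x a i) - (∑ i, w₂ i * φ x a i)| +
        |Real.sqrt (φ x a ⬝ᵥ A₁ *ᵥ φ x a) - Real.sqrt (φ x a ⬝ᵥ A₂ *ᵥ φ x a)| := by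
        rw [add_sub_add_comm]; exact abs_add_le _ _
    _ ≤ c := add_le_add hlin hsq
end

section
/- Let d ≥ 1 and K ≥ 1. Let Λ₀ be a real symmetric positive definite d×d matrix with Λ₀ − I positive semidefinite, and let φ_1, …, φ_K ∈ ℝ^d satisfy ‖φ_k‖₂ ≤ 1 for all k. Define Λ_k = Λ₀ + Σ_{i=1}^{k-1} φ_i φ_iᵀ for k = 1, …, K+1. Then Σ_{k=1}^{K} φ_kᵀ (Λ_k)^{-1} φ_k ≤ 2 log( det(Λ_{K+1}) / det(Λ₁) ). -/
/-!
By the matrix determinant lemma, `det Λ_{k+1} = det Λ_k * (1 + x_k)` with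
`x_k = φ_kᵀ Λ_k⁻¹ φ_k`, so `log (det Λ_{K+1} / det Λ₁) = Σ_k log (1 + x_k)`. Since `Λ_k ⪰ I`,
`0 ≤ x_k ≤ ‖φ_k‖² ≤ 1`, and on `[0, 2]` one has `x ≤ 2 log (1 + x)`.
-/

open scoped BigOperators Matrix

open Matrix Finset

theorem Real.le_two_mul_log_one_add {x : ℝ} (h0 : 0 ≤ x) (h2 : x ≤ 2) :
    x ≤ 2 * Real.log (1 + x) := by
  have h := Real.le_log_one_add_of_nonneg h0
  rw [div_le_iff₀ (by linarith)] at h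
  nlinarith

theorem sum_le_two_mul_log_div_of_eq_mul_one_add {a x : ℕ → ℝ} {K : ℕ} (ha : ∀ i, 0 < a i)
    (hstep : ∀ i < K, a (i + 1) = a i * (1 + x i)) (hx₀ : ∀ i < K, 0 ≤ x i)
    (hx₂ : ∀ i < K, x i ≤ 2) :
    ∑ i ∈ range K, x i ≤ 2 * Real.log (a K / a 0) := by
  have hlog : Real.log (a K / a 0) = ∑ i ∈ range K, Real.log (1 + x i) := by
    rw [Real.log_div (ha K).ne' (ha 0).ne', ← sum_range_sub (fun i => Real.log (a i))]
    refine sum_congr rfl fun i hi => ?_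
    have hi := mem_range.1 hi
    rw [hstep i hi, Real.log_mul (ha i).ne' (by linarith [hx₀ i hi])]
    ring
  rw [hlog, mul_sum]
  refine sum_le_sum fun i hi => ?_
  exact Real.le_two_mul_log_one_add (hx₀ i (mem_range.1 hi)) (hx₂ i (mem_range.1 hi))

namespace Matrix

variable {n : Type*} [Fintype n] [DecidableEq n]

theorem det_one_add_vecMulVec {α : Type*} [CommRing α] (u v : n → α) :
    (1 + vecMulVec u v).det = 1 + v ⬝ᵥ u := by
  rw [vecMulVec_eq Unit, det_one_add_replicateCol_mul_replicateRow]

theorem det_add_vecMulVec {α : Type*} [CommRing α] {A : Matrix n n α} (hA : IsUnit A.det)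
    (u v : n → α) : (A + vecMulVec u v).det = A.det * (1 + v ⬝ᵥ A⁻¹ *ᵥ u) := by
  have hfactor : A + vecMulVec u v = A * (1 + vecMulVec (A⁻¹ *ᵥ u) v) := by
    rw [Matrix.mul_add, Matrix.mul_one, mul_vecMulVec, mulVec_mulVec, mul_nonsing_inv A hA,
      one_mulVec]
  rw [hfactor, det_mul, det_one_add_vecMulVec]

omit [Fintype n] in
theorem posDef_of_posSemidef_sub_one {A : Matrix n n ℝ} (hA : (A - 1).PosSemidef) :
    A.PosDef := by
  simpa using PosDef.one.add_posSemidef hA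

omit [DecidableEq n] in
theorem dotProduct_sq_le_dotProduct_self_mul (u v : n → ℝ) :
    (u ⬝ᵥ v) ^ 2 ≤ (u ⬝ᵥ u) * (v ⬝ᵥ v) := by
  simpa only [dotProduct, sq] using sum_mul_sq_le_sq_mul_sq univ u v

/-- With `y = A⁻¹ u`: `y ⬝ y ≤ y ⬝ A y = u ⬝ y`, and Cauchy–Schwarz gives
`(u ⬝ y)² ≤ (u ⬝ u) (y ⬝ y)`. -/
theorem dotProduct_inv_mulVec_le_of_posSemidef_sub_one {A : Matrix n n ℝ}
    (hA : (A - 1).PosSemidef) (u : n → ℝ) : u ⬝ᵥ A⁻¹ *ᵥ u ≤ u ⬝ᵥ u := by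
  set y := A⁻¹ *ᵥ u
  have hAy : A *ᵥ y = u := by
    rw [mulVec_mulVec, mul_nonsing_inv _ (posDef_of_posSemidef_sub_one hA).det_pos.ne'.isUnit,
      one_mulVec]
  have hyy : y ⬝ᵥ y ≤ u ⬝ᵥ y := by
    have h := hA.dotProduct_mulVec_nonneg y
    rw [star_trivial, sub_mulVec, one_mulVec, hAy, dotProduct_sub, dotProduct_comm] at h
    linarith
  have huu : 0 ≤ u ⬝ᵥ u := by simpa using dotProduct_star_self_nonneg u
  nlinarith [dotProduct_sq_le_dotProduct_self_mul u y]

end Matrix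

section DesignMatrix

variable {n : Type*}

/-- `designMatrix Λ₀ φ k` is the paper's `Λ_{k+1}`. -/
noncomputable def designMatrix (Λ₀ : Matrix n n ℝ) (φ : ℕ → n → ℝ) (k : ℕ) : Matrix n n ℝ :=
  Λ₀ + ∑ i ∈ Icc 1 k, vecMulVec (φ i) (φ i)

variable {Λ₀ : Matrix n n ℝ} {φ : ℕ → n → ℝ}

@[simp]
theorem designMatrix_zero : designMatrix Λ₀ φ 0 = Λ₀ := by
  simp [designMatrix]

theorem designMatrix_succ (k : ℕ) :
    designMatrix Λ₀ φ (k + 1) = designMatrix Λ₀ φ k + vecMulVec (φ (k + 1)) (φ (k + 1)) := by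
  rw [designMatrix, designMatrix, sum_Icc_succ_top (Nat.le_add_left 1 k), add_assoc]

variable [Fintype n] [DecidableEq n]

theorem posSemidef_designMatrix_sub_one (h : (Λ₀ - 1).PosSemidef) (k : ℕ) :
    (designMatrix Λ₀ φ k - 1).PosSemidef := by
  rw [designMatrix, add_sub_right_comm]
  exact h.add <| posSemidef_sum _ fun i _ => by simpa using posSemidef_vecMulVec_self_star (φ i)

theorem sum_dotProduct_inv_designMatrix_mulVec_le (h : (Λ₀ - 1).PosSemidef) {K : ℕ}
    (hφ : ∀ i < K, φ (i + 1) ⬝ᵥ φ (i + 1) ≤ 2) :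
    ∑ i ∈ range K, φ (i + 1) ⬝ᵥ (designMatrix Λ₀ φ i)⁻¹ *ᵥ φ (i + 1) ≤
      2 * Real.log ((designMatrix Λ₀ φ K).det / Λ₀.det) := by
  have hpd k : (designMatrix Λ₀ φ k).PosDef :=
    posDef_of_posSemidef_sub_one (posSemidef_designMatrix_sub_one h k)
  refine (sum_le_two_mul_log_div_of_eq_mul_one_add (fun k => (hpd k).det_pos)
    (fun i _ => ?step) (fun i _ => ?nonneg) (fun i hi => ?le_two)).trans_eq
    (by rw [designMatrix_zero])
  case step => rw [designMatrix_succ, det_add_vecMulVec (hpd i).det_pos.ne'.isUnit]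
  case nonneg => simpa using (hpd i).inv.posSemidef.dotProduct_mulVec_nonneg (φ (i + 1))
  case le_two =>
    exact (dotProduct_inv_mulVec_le_of_posSemidef_sub_one
      (posSemidef_designMatrix_sub_one h i) _).trans (hφ i hi)

end DesignMatrix

theorem elliptical_potential_general (d K : ℕ)
    (Λ₀ : Matrix (Fin d) (Fin d) ℝ)
    (hreg : (Λ₀ - 1).PosSemidef)
    (φ : ℕ → Fin d → ℝ)
    (hφ : ∀ k ∈ Finset.Icc 1 K, Real.sqrt (∑ i, φ k i ^ 2) ≤ 1) :
    ∑ k ∈ Finset.Icc 1 K,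
        φ k ⬝ᵥ (Λ₀ + ∑ i ∈ Finset.Icc 1 (k - 1), Matrix.vecMulVec (φ i) (φ i))⁻¹ *ᵥ φ k ≤
      2 * Real.log
        ((Λ₀ + ∑ i ∈ Finset.Icc 1 K, Matrix.vecMulVec (φ i) (φ i)).det / Λ₀.det) := by
  have hnorm : ∀ i < K, φ (i + 1) ⬝ᵥ φ (i + 1) ≤ 2 := fun i hi => by
    have h := Real.sqrt_le_one.1 (hφ (i + 1) (mem_Icc.2 ⟨by omega, by omega⟩))
    simp only [dotProduct, ← sq]
    linarith
  have hreindex (f : ℕ → ℝ) : ∑ k ∈ Icc 1 K, f k = ∑ i ∈ range K, f (i + 1) := by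
    rw [range_eq_Ico, sum_Ico_add' f, zero_add, Ico_add_one_right_eq_Icc]
  rw [hreindex]
  exact sum_dotProduct_inv_designMatrix_mulVec_le hreg hnorm

/-- Elliptical potential (log-determinant) lemma: if `Λ₀ ⪰ I` and `‖φ_k‖₂ ≤ 1`, then
with `Λ_k = Λ₀ + Σ_{i<k} φ_i φ_iᵀ`,
`Σ_{k=1}^K φ_kᵀ Λ_k^{-1} φ_k ≤ 2 log(det Λ_{K+1} / det Λ₁)`. -/
theorem elliptical_potential (d K : ℕ) (hd : 1 ≤ d) (hK : 1 ≤ K)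
    (Λ₀ : Matrix (Fin d) (Fin d) ℝ) (hΛ₀ : Λ₀.PosDef)
    (hreg : (Λ₀ - 1).PosSemidef)
    (φ : ℕ → Fin d → ℝ)
    (hφ : ∀ k ∈ Finset.Icc 1 K, Real.sqrt (∑ i, φ k i ^ 2) ≤ 1) :
    ∑ k ∈ Finset.Icc 1 K,
        φ k ⬝ᵥ (Λ₀ + ∑ i ∈ Finset.Icc 1 (k - 1), Matrix.vecMulVec (φ i) (φ i))⁻¹ *ᵥ φ k ≤
      2 * Real.log
        ((Λ₀ + ∑ i ∈ Finset.Icc 1 K, Matrix.vecMulVec (φ i) (φ i)).det / Λ₀.det) :=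
  elliptical_potential_general d K Λ₀ hreg φ hφ
end
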